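/- arXiv:1506.07377 — 2 statements merged into one kernel-verified Lean document; each statement's English description precedes it below -/
import Mathlib

section
/- Let 𝒞 be a pretriangulated category with a weight structure and let X ∈ 𝒞^{w≤0}. Suppose given distinguished triangles A → X → X' → A[1] and B[1] → X' → X'' → B[2] with A, B ∈ 𝒞^{w≥0}, X' ∈ 𝒞^{w<0} and X'' ∈ 𝒞^{w<-1}. Then A and B lie in the heart 𝒞^{w=0}, and for every T ∈ 𝒞^{w=0} the sequence Hom(T, B) → Hom(T, A) → Hom(T, X) → 0 is exact, where the first map is induced by the composite B → X'[-1] → A obtained by rotating the two given triangles, and the second map is induced by A → X. -/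
/-!
Rotating the first triangle exhibits `A` as an extension of `X` by `X'[-1]`, and shifting and
rotating the second exhibits `B[1]` as an extension of `X'` by `X''[-1]`; since `𝒞^{w≤n}` is
extension-closed, `A` and `B` have weight `≤ 0`. For `T` of weight `≥ 0`, orthogonality kills
every map from `T` into `X'` and into `X''[-1]`, both of weight `≤ -1`. The long exact
`Hom(T, -)`-sequences of the two triangles then make `f_*` surjective, and let a `ψ : T → A`
with `ψ ≫ f = 0` be lifted first along `X'[-1] → A` and then along `B → X'[-1]`.
-/

open CategoryTheory Category Limits Pretriangulated

/-- A weight structure on a pretriangulated category. -/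
structure WeightStructure (C : Type*) [Category C] [HasZeroObject C] [HasShift C ℤ]
    [Preadditive C] [∀ n : ℤ, (CategoryTheory.shiftFunctor C n).Additive]
    [Pretriangulated C] [HasBinaryBiproducts C] where
  le : C → Prop
  ge : C → Prop
  le_of_isZero : ∀ X : C, IsZero X → le X
  ge_of_isZero : ∀ X : C, IsZero X → ge X
  le_of_iso : ∀ {X Y : C}, (X ≅ Y) → le X → le Y
  ge_of_iso : ∀ {X Y : C}, (X ≅ Y) → ge X → ge Y
  le_biprod : ∀ X Y : C, le X → le Y → le (X ⊞ Y)
  ge_biprod : ∀ X Y : C, ge X → ge Y → ge (X ⊞ Y)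
  le_retract : ∀ (X Y : C) (i : X ⟶ Y) (p : Y ⟶ X), i ≫ p = 𝟙 X → le Y → le X
  ge_retract : ∀ (X Y : C) (i : X ⟶ Y) (p : Y ⟶ X), i ≫ p = 𝟙 X → ge Y → ge X
  ge_shift : ∀ X : C, ge X → ge (X⟦(-1 : ℤ)⟧)
  le_shift : ∀ X : C, le X → le (X⟦(1 : ℤ)⟧)
  orth : ∀ {X Y : C}, ge X → le Y → ∀ f : X ⟶ Y⟦(1 : ℤ)⟧, f = 0
  decomp : ∀ X : C, ∃ (A B : C) (f : B ⟶ X) (g : X ⟶ A) (h : A ⟶ B⟦(1 : ℤ)⟧),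
    ge (B⟦(1 : ℤ)⟧) ∧ le A ∧ Triangle.mk f g h ∈ distTriang C

variable {C : Type*} [Category C] [HasZeroObject C] [HasShift C ℤ]
  [Preadditive C] [∀ n : ℤ, (CategoryTheory.shiftFunctor C n).Additive]
  [Pretriangulated C] [HasBinaryBiproducts C]

/-- `X ∈ 𝒞^{w≤n}`, i.e. `X⟦n⟧ ∈ 𝒞^{w≤0}`. -/
def WeightStructure.leN (w : WeightStructure C) (n : ℤ) (X : C) : Prop := w.le (X⟦n⟧)

/-- The heart `𝒞^{w=0} = 𝒞^{w≥0} ∩ 𝒞^{w≤0}`. -/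
def WeightStructure.heart (w : WeightStructure C) (X : C) : Prop := w.ge X ∧ w.le X

/-- The composite `B → X'[-1] → A` obtained by rotating (shifting by `[-1]`) the maps
`u : B[1] → X'` and `h : X' → A[1]`. -/
noncomputable def rotComp {A B X' : C} (u : B⟦(1 : ℤ)⟧ ⟶ X') (h : X' ⟶ A⟦(1 : ℤ)⟧) :
    B ⟶ A :=
  ((shiftFunctorCompIsoId C (1 : ℤ) (-1 : ℤ) (by omega)).app B).inv ≫
    (CategoryTheory.shiftFunctor C (-1 : ℤ)).map u ≫
    (CategoryTheory.shiftFunctor C (-1 : ℤ)).map h ≫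
    ((shiftFunctorCompIsoId C (1 : ℤ) (-1 : ℤ) (by omega)).app A).hom

section

variable {D : Type*} [Category D] [HasZeroObject D] [HasShift D ℤ] [Preadditive D]
  [∀ n : ℤ, (CategoryTheory.shiftFunctor D n).Additive] [Pretriangulated D]

lemma CategoryTheory.Pretriangulated.Triangle.coyoneda_exact₂_shift (T : Triangle D)
    (hT : T ∈ distTriang D) (n : ℤ) {Z : D} (α : Z ⟶ T.obj₂⟦n⟧) (hα : α ≫ T.mor₂⟦n⟧' = 0) :
    ∃ β : Z ⟶ T.obj₁⟦n⟧, β ≫ T.mor₁⟦n⟧' = α := by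
  obtain ⟨β, hβ⟩ : ∃ β : Z ⟶ T.obj₁⟦n⟧, α = β ≫ (n.negOnePow • T.mor₁⟦n⟧') :=
    coyoneda_exact₂ _ (shift_distinguished T hT n) α (by
      change α ≫ (n.negOnePow • T.mor₂⟦n⟧') = 0
      rw [Linear.comp_units_smul, hα, smul_zero])
  exact ⟨n.negOnePow • β, by rw [hβ, Linear.comp_units_smul, Linear.units_smul_comp]⟩

lemma exists_comp_shift_map_mor₃_eq {A X X' Z : D} {f : A ⟶ X} {g : X ⟶ X'}
    {h : X' ⟶ A⟦(1 : ℤ)⟧} (hT : Triangle.mk f g h ∈ distTriang D) (ψ : Z ⟶ A)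
    (hψ : ψ ≫ f = 0) :
    ∃ χ : Z ⟶ X'⟦(-1 : ℤ)⟧, χ ≫ h⟦(-1 : ℤ)⟧' ≫
      ((shiftFunctorCompIsoId D (1 : ℤ) (-1 : ℤ) (add_neg_cancel 1)).app A).hom = ψ := by
  obtain ⟨χ, hχ⟩ : ∃ χ : Z ⟶ X'⟦(-1 : ℤ)⟧, ψ = χ ≫ (-(h⟦(-1 : ℤ)⟧' ≫
      ((shiftFunctorCompIsoId D (1 : ℤ) (-1 : ℤ) (add_neg_cancel 1)).app A).hom)) :=
    Triangle.coyoneda_exact₂ _ (inv_rot_of_distTriang _ hT) ψ hψ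
  exact ⟨-χ, by simp [hχ]⟩

lemma rotComp_comp_eq_zero {A B X X' : D} {f : A ⟶ X} {g : X ⟶ X'} {h : X' ⟶ A⟦(1 : ℤ)⟧}
    (hT : Triangle.mk f g h ∈ distTriang D) (u : B⟦(1 : ℤ)⟧ ⟶ X') :
    rotComp u h ≫ f = 0 := by
  have h₀ : (-(h⟦(-1 : ℤ)⟧' ≫
      ((shiftFunctorCompIsoId D (1 : ℤ) (-1 : ℤ) (add_neg_cancel 1)).app A).hom)) ≫ f = 0 :=
    comp_distTriang_mor_zero₁₂ _ (inv_rot_of_distTriang _ hT)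
  rw [Preadditive.neg_comp, neg_eq_zero, assoc] at h₀
  simp only [rotComp, assoc, h₀, comp_zero]

lemma exists_comp_rotComp_eq {A B X X' X'' Z : D} {f : A ⟶ X} {g : X ⟶ X'}
    {h : X' ⟶ A⟦(1 : ℤ)⟧} (hT₁ : Triangle.mk f g h ∈ distTriang D)
    {u : B⟦(1 : ℤ)⟧ ⟶ X'} {v : X' ⟶ X''} {t : X'' ⟶ B⟦(1 : ℤ)⟧⟦(1 : ℤ)⟧}
    (hT₂ : Triangle.mk u v t ∈ distTriang D) (hv : ∀ χ : Z ⟶ X'⟦(-1 : ℤ)⟧, χ ≫ v⟦(-1 : ℤ)⟧' = 0)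
    (ψ : Z ⟶ A) (hψ : ψ ≫ f = 0) : ∃ χ : Z ⟶ B, χ ≫ rotComp u h = ψ := by
  obtain ⟨χ, rfl⟩ := exists_comp_shift_map_mor₃_eq hT₁ ψ hψ
  obtain ⟨β, rfl⟩ : ∃ β : Z ⟶ B⟦(1 : ℤ)⟧⟦(-1 : ℤ)⟧, β ≫ u⟦(-1 : ℤ)⟧' = χ :=
    Triangle.coyoneda_exact₂_shift _ hT₂ (-1) χ (hv χ)
  exact ⟨β ≫ ((shiftFunctorCompIsoId D (1 : ℤ) (-1 : ℤ) (add_neg_cancel 1)).app B).hom,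
    by simp only [rotComp, assoc, Iso.hom_inv_id_assoc]⟩

end

namespace WeightStructure

variable (w : WeightStructure C)

lemma leN_shift_iff {X : C} {m n : ℤ} : w.leN m (X⟦n⟧) ↔ w.leN (n + m) X :=
  ⟨w.le_of_iso ((shiftFunctorAdd' C n m _ rfl).app X).symm,
    w.le_of_iso ((shiftFunctorAdd' C n m _ rfl).app X)⟩

lemma leN_zero_iff {X : C} : w.leN 0 X ↔ w.le X :=
  ⟨w.le_of_iso ((shiftFunctorZero C ℤ).app X), w.le_of_iso ((shiftFunctorZero C ℤ).app X).symm⟩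

lemma hom_eq_zero_of_ge_shift_of_le {X Y : C} (hX : w.ge (X⟦(1 : ℤ)⟧)) (hY : w.le Y)
    (α : X ⟶ Y) : α = 0 :=
  (shiftFunctor C (1 : ℤ)).map_injective (by rw [Functor.map_zero]; exact w.orth hX hY _)

lemma hom_eq_zero_of_ge_of_leN {X Y : C} (hX : w.ge X) (hY : w.leN (-1) Y) (α : X ⟶ Y) :
    α = 0 := by
  let e := (shiftFunctorCompIsoId C (-1 : ℤ) (1 : ℤ) (neg_add_cancel 1)).app Y
  calc α = (α ≫ e.inv) ≫ e.hom := by simp [e]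
    _ = 0 := by rw [w.orth hX hY (α ≫ e.inv), zero_comp]

lemma le_obj₂_of_distTriang (T : Triangle C) (hT : T ∈ distTriang C) (h₁ : w.le T.obj₁)
    (h₃ : w.le T.obj₃) : w.le T.obj₂ := by
  obtain ⟨A, B, b, g, m, hB, hA, hdt⟩ := w.decomp T.obj₂
  obtain ⟨c, hc⟩ := Triangle.coyoneda_exact₂ T hT b (w.hom_eq_zero_of_ge_shift_of_le hB h₃ _)
  -- `b` vanishes, so `T.obj₂` is a retract of the `w≤0` part of its weight decomposition
  have hb : b = 0 := by rw [hc, w.hom_eq_zero_of_ge_shift_of_le hB h₁ c, zero_comp]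
  obtain ⟨r, hr⟩ := Triangle.yoneda_exact₂ _ hdt (𝟙 T.obj₂) ((comp_id b).trans hb)
  exact w.le_retract T.obj₂ A g r hr.symm hA

lemma leN_obj₁_of_distTriang (T : Triangle C) (hT : T ∈ distTriang C) (n : ℤ)
    (h₂ : w.leN n T.obj₂) (h₃ : w.leN (n - 1) T.obj₃) : w.leN n T.obj₁ :=
  w.le_obj₂_of_distTriang _ (inv_rot_of_distTriang _ (Triangle.shift_distinguished T hT n))
    (w.leN_shift_iff.2 h₃) h₂

end WeightStructure

/-- Given `X ∈ 𝒞^{w≤0}` with distinguished triangles `A → X → X' → A[1]` and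
`B[1] → X' → X'' → B[2]` where `A, B ∈ 𝒞^{w≥0}`, `X' ∈ 𝒞^{w<0}` and `X'' ∈ 𝒞^{w<-1}`,
the objects `A` and `B` lie in the heart, and for every `T` in the heart the sequence
`Hom(T, B) → Hom(T, A) → Hom(T, X) → 0` is exact, the first map being induced by the
composite `B → X'[-1] → A` and the second by `A → X`. -/
theorem stmt_8 (w : WeightStructure C)
    (X A X' B X'' : C) (hX : w.le X)
    (f : A ⟶ X) (g : X ⟶ X') (h : X' ⟶ A⟦(1 : ℤ)⟧)
    (hT₁ : Triangle.mk f g h ∈ distTriang C)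
    (u : B⟦(1 : ℤ)⟧ ⟶ X') (v : X' ⟶ X'') (wmap : X'' ⟶ (B⟦(1 : ℤ)⟧)⟦(1 : ℤ)⟧)
    (hT₂ : Triangle.mk u v wmap ∈ distTriang C)
    (hA : w.ge A) (hB : w.ge B)
    (hX' : w.leN (-1) X') (hX'' : w.leN (-2) X'') :
    w.heart A ∧ w.heart B ∧
      ∀ T : C, w.heart T →
        (∀ χ : T ⟶ B, χ ≫ rotComp u h ≫ f = 0) ∧
        (∀ ψ : T ⟶ A, ψ ≫ f = 0 → ∃ χ : T ⟶ B, χ ≫ rotComp u h = ψ) ∧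
        (∀ φ : T ⟶ X, ∃ ψ : T ⟶ A, ψ ≫ f = φ) := by
  have hleA : w.le A :=
    w.leN_zero_iff.1 (w.leN_obj₁_of_distTriang _ hT₁ 0 (w.leN_zero_iff.2 hX) hX')
  have hleB : w.le B :=
    w.leN_zero_iff.1 (w.leN_shift_iff.1 (w.leN_obj₁_of_distTriang _ hT₂ (-1) hX' hX''))
  refine ⟨⟨hA, hleA⟩, ⟨hB, hleB⟩, fun T hT => ⟨fun χ => ?_, fun ψ hψ => ?_, fun φ => ?_⟩⟩
  · rw [rotComp_comp_eq_zero hT₁, comp_zero]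
  · exact exists_comp_rotComp_eq hT₁ hT₂
      (fun χ => w.hom_eq_zero_of_ge_of_leN hT.1 (w.leN_shift_iff.2 hX'') _) ψ hψ
  · obtain ⟨ψ, hψ⟩ := Triangle.coyoneda_exact₂ _ hT₁ φ (w.hom_eq_zero_of_ge_of_leN hT.1 hX' _)
    exact ⟨ψ, hψ.symm⟩
end

section
/- Let 𝒞 be a pretriangulated category with a bounded weight structure. Then 𝒞 coincides with the smallest strictly full triangulated subcategory of itself containing the heart 𝒞^{w=0}; that is, every object of 𝒞 belongs to the closure of the heart under isomorphisms, shifts and cones (extensions). -/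
open CategoryTheory Category Limits Pretriangulated

variable {C : Type*} [Category C] [HasZeroObject C] [HasShift C ℤ]
  [Preadditive C] [∀ n : ℤ, (CategoryTheory.shiftFunctor C n).Additive]
  [Pretriangulated C] [HasBinaryBiproducts C]

/-- `X ∈ 𝒞^{w≥n}`, i.e. `X⟦n⟧ ∈ 𝒞^{w≥0}`. -/
def WeightStructure.geN (w : WeightStructure C) (n : ℤ) (X : C) : Prop := w.ge (X⟦n⟧)

/-- A weight structure is bounded if every object lies in some `𝒞^{w≥n}` and some
`𝒞^{w≤m}`. -/
def WeightStructure.Bounded (w : WeightStructure C) : Prop :=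
  ∀ X : C, ∃ n m : ℤ, w.geN n X ∧ w.leN m X

/-- The smallest strictly full triangulated subcategory of `C` containing a class `S` of
objects: closure of `S` under isomorphisms, shifts and cones (it contains the zero
objects). -/
inductive TriaClosure (S : C → Prop) : C → Prop
  | of (X : C) (hX : S X) : TriaClosure S X
  | zero (X : C) (hX : IsZero X) : TriaClosure S X
  | iso {X Y : C} (e : X ≅ Y) (hX : TriaClosure S X) : TriaClosure S Y
  | shift (X : C) (n : ℤ) (hX : TriaClosure S X) : TriaClosure S (X⟦n⟧)
  | cone {T : Triangle C} (hT : T ∈ distTriang C) (h₁ : TriaClosure S T.obj₁)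
      (h₂ : TriaClosure S T.obj₂) : TriaClosure S T.obj₃

/-!
After a shift, an object `Y` lies in `𝒞^{w≥0} ∩ 𝒞^{w≤k}` for some `k : ℕ`. Its weight
decomposition `B ⟶ Y ⟶ A ⟶ B⟦1⟧` exhibits `Y` as an extension of `A` by `B`, where `A` lies in
the heart and `B⟦1⟧` in `𝒞^{w≥0} ∩ 𝒞^{w≤k-1}`; induction on `k` finishes the proof. Both bounds
come from the fact that `𝒞^{w≤0}` and `𝒞^{w≥0}` are closed under extensions, which in turn holds
because an orthogonality argument makes the weight decomposition of an extension split.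
-/

namespace TriaClosure

variable {S : C → Prop}

lemma of_shift {X : C} (n : ℤ) (h : TriaClosure S (X⟦n⟧)) : TriaClosure S X :=
  iso ((shiftFunctorCompIsoId C n (-n) (by omega)).app X) (shift _ (-n) h)

lemma ext₂ {T : Triangle C} (hT : T ∈ distTriang C) (h₁ : TriaClosure S T.obj₁)
    (h₃ : TriaClosure S T.obj₃) : TriaClosure S T.obj₂ :=
  cone (inv_rot_of_distTriang _ hT) (shift _ (-1) h₃) h₁

end TriaClosure

namespace WeightStructure

variable (w : WeightStructure C)

lemma le_of_mono {X Y : C} (f : X ⟶ Y) [Mono f] (hY : w.le Y) : w.le X :=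
  have := isSplitMono_of_mono f
  w.le_retract X Y f (retraction f) (IsSplitMono.id f) hY

lemma ge_of_epi {X Y : C} (f : Y ⟶ X) [Epi f] (hY : w.ge Y) : w.ge X :=
  have := isSplitEpi_of_epi f
  w.ge_retract X Y (section_ f) f (IsSplitEpi.id f) hY

lemma hom_eq_zero_of_ge_shift_one {X Y : C} (hX : w.ge (X⟦(1 : ℤ)⟧)) (hY : w.le Y)
    (f : X ⟶ Y) : f = 0 :=
  (Functor.map_eq_zero_iff (shiftFunctor C (1 : ℤ))).1 (w.orth hX hY _)

/-- In the weight decomposition `B ⟶ T.obj₂ ⟶ A` the first map vanishes, so `T.obj₂` is a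
retract of `A`. -/
lemma le₂_of_distTriang {T : Triangle C} (hT : T ∈ distTriang C) (h₁ : w.le T.obj₁)
    (h₃ : w.le T.obj₃) : w.le T.obj₂ := by
  obtain ⟨A, B, f, g, h, hB, hA, hD⟩ := w.decomp T.obj₂
  have hf : f = 0 := by
    obtain ⟨e, rfl⟩ := Triangle.coyoneda_exact₂ T hT f (w.hom_eq_zero_of_ge_shift_one hB h₃ _)
    rw [w.hom_eq_zero_of_ge_shift_one hB h₁ e, zero_comp]
  have : Mono g := Triangle.mono₂ _ hD hf
  exact w.le_of_mono g hA

/-- In the weight decomposition `B ⟶ T.obj₂⟦-1⟧ ⟶ A` the second map vanishes, so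
`T.obj₂⟦-1⟧⟦1⟧ ≅ T.obj₂` is a retract of `B⟦1⟧`. -/
lemma ge₂_of_distTriang {T : Triangle C} (hT : T ∈ distTriang C) (h₁ : w.ge T.obj₁)
    (h₃ : w.ge T.obj₃) : w.ge T.obj₂ := by
  obtain ⟨A, B, f, g, h, hB, hA, hD⟩ := w.decomp (T.obj₂⟦(-1 : ℤ)⟧)
  have hT₂ : ∀ φ : T.obj₂ ⟶ A⟦(1 : ℤ)⟧, φ = 0 := by
    intro φ
    obtain ⟨χ, rfl⟩ := Triangle.yoneda_exact₂ T hT φ (w.orth h₁ hA _)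
    rw [w.orth h₃ hA χ, comp_zero]
  let e := (shiftFunctorCompIsoId C (-1 : ℤ) 1 (by omega)).app T.obj₂
  have hg : g = 0 := by
    rw [← Functor.map_eq_zero_iff (shiftFunctor C (1 : ℤ)),
      ← Preadditive.IsIso.comp_left_eq_zero (f := e.inv)]
    exact hT₂ _
  have : Epi (-f⟦(1 : ℤ)⟧') := Triangle.epi₃ _ (rot_of_distTriang _ hD) hg
  exact w.ge_of_iso e (w.ge_of_epi (-f⟦(1 : ℤ)⟧') hB)

lemma le_shift_mono {X : C} {a b : ℤ} (hab : a ≤ b) (hX : w.le (X⟦a⟧)) : w.le (X⟦b⟧) := by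
  induction b, hab using Int.leInduction with
  | base => exact hX
  | succ b _ ih =>
    exact w.le_of_iso ((shiftFunctorAdd' C b 1 (b + 1) rfl).app X).symm (w.le_shift _ ih)

lemma triaClosure_heart_of_ge_of_le_shift (k : ℕ) {Y : C} (hge : w.ge Y)
    (hle : w.le (Y⟦(k : ℤ)⟧)) : TriaClosure w.heart Y := by
  induction k generalizing Y with
  | zero => exact TriaClosure.of Y ⟨hge, w.le_of_iso ((shiftFunctorZero C ℤ).app Y) hle⟩
  | succ k ih =>
    obtain ⟨A, B, f, g, h, hB, hA, hD⟩ := w.decomp Y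
    have hAge : w.ge A := w.ge₂_of_distTriang (rot_of_distTriang _ hD) hge hB
    have hBle : w.le (B⟦(1 : ℤ)⟧⟦(k : ℤ)⟧) := by
      refine w.le₂_of_distTriang
        (Triangle.shift_distinguished _ (rot_of_distTriang _ (rot_of_distTriang _ hD)) k) ?_ ?_
      · exact w.le_shift_mono (Nat.cast_nonneg k)
          (w.le_of_iso ((shiftFunctorZero C ℤ).app A).symm hA)
      · exact w.le_of_iso ((shiftFunctorAdd' C 1 (k : ℤ) ((k + 1 : ℕ) : ℤ) (by omega)).app Y) hle
    exact TriaClosure.ext₂ hD (TriaClosure.of_shift 1 (ih hB hBle)) (TriaClosure.of A ⟨hAge, hA⟩)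

end WeightStructure

/-- A pretriangulated category with a bounded weight structure is generated, as a
triangulated category, by its heart: every object lies in the closure of the heart under
isomorphisms, shifts and cones. -/
theorem stmt_12 (w : WeightStructure C) (hb : w.Bounded) :
    ∀ X : C, TriaClosure w.heart X := by
  intro X
  obtain ⟨n, m, hge, hle⟩ := hb X
  refine TriaClosure.of_shift n (w.triaClosure_heart_of_ge_of_le_shift (m - n).toNat hge ?_)
  exact w.le_of_iso ((shiftFunctorAdd' C n _ _ rfl).app X) (w.le_shift_mono (by omega) hle)
end
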